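/- arXiv:1107.2949 — 6 statements merged into one kernel-verified Lean document; each statement's English description precedes it below -/
import Mathlib

section
/- Let P be a set of n points in the plane, all lying strictly above the x-axis, in general position. The number of distinct subsets of P of size exactly k that can be realized as the intersection of P with an axis-parallel rectangle whose bottom edge lies on the x-axis is at most O(n·k²). -/
open Finset

/-- The point of `S` with lexicographically largest `(y, x)`. -/
noncomputable def topPt (S : Finset (ℝ × ℝ)) : ℝ × ℝ :=
  if h : S.Nonempty then
    let m := (S.image fun p => toLex (p.2, p.1)).max' (h.image _)
    ((ofLex m).2, (ofLex m).1)
  else 0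

lemma topPt_mem {S : Finset (ℝ × ℝ)} (h : S.Nonempty) : topPt S ∈ S := by
  rw [topPt, dif_pos h]
  have hm := Finset.max'_mem (S.image fun p => toLex (p.2, p.1)) (h.image _)
  rw [Finset.mem_image] at hm
  obtain ⟨p, hp, hpe⟩ := hm
  simp only [← hpe, ofLex_toLex]
  exact hp

lemma le_topPt {S : Finset (ℝ × ℝ)} (h : S.Nonempty) {p : ℝ × ℝ} (hp : p ∈ S) :
    p.2 ≤ (topPt S).2 := by
  rw [topPt, dif_pos h]
  have hle := Finset.le_max' (S.image fun p => toLex (p.2, p.1)) (toLex (p.2, p.1))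
    (Finset.mem_image_of_mem _ hp)
  set m := (S.image fun p => toLex (p.2, p.1)).max' (h.image _) with hm
  have : toLex (p.2, p.1) ≤ toLex (ofLex m) := by simpa using hle
  rw [Prod.Lex.le_iff] at this
  rcases this with h1 | ⟨h1, _⟩
  · exact le_of_lt h1
  · exact le_of_eq h1

/-- Two "final segments" of the same ground set with equal cardinality are equal. -/
lemma seg_eq (key : ℝ × ℝ → ℝ) {A B G : Finset (ℝ × ℝ)} (hA : A ⊆ G) (hB : B ⊆ G)
    (hAc : ∀ p ∈ A, ∀ q ∈ G, key p < key q → q ∈ A)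
    (hBc : ∀ p ∈ B, ∀ q ∈ G, key p < key q → q ∈ B)
    (hx : ∀ p ∈ G, ∀ q ∈ G, p ≠ q → key p ≠ key q)
    (hcard : A.card = B.card) : A = B := by
  by_contra hne
  have h1 : ∃ p ∈ A, p ∉ B := by
    by_contra h
    push_neg at h
    exact hne (Finset.eq_of_subset_of_card_le (fun x hx => h x hx) hcard.ge)
  have h2 : ∃ q ∈ B, q ∉ A := by
    by_contra h
    push_neg at h
    exact hne (Finset.eq_of_subset_of_card_le (fun x hx => h x hx) hcard.le).symm
  obtain ⟨p, hpA, hpB⟩ := h1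
  obtain ⟨q, hqB, hqA⟩ := h2
  have hpq : p ≠ q := by rintro rfl; exact hpB hqB
  rcases lt_trichotomy (key p) (key q) with h | h | h
  · exact hqA (hAc p hpA q (hB hqB) h)
  · exact hx p (hA hpA) q (hB hqB) hpq h
  · exact hpB (hBc q hqB p (hA hpA) h)

lemma realized_eq {P : Finset (ℝ × ℝ)}
    (hpos : ∀ p ∈ P, 0 < p.2)
    (hgen : ∀ p ∈ P, ∀ q ∈ P, p ≠ q → p.1 ≠ q.1 ∧ p.2 ≠ q.2)
    {S₁ S₂ : Finset (ℝ × ℝ)} {r : ℝ × ℝ}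
    {a₁ b₁ c₁ a₂ b₂ c₂ : ℝ}
    (hS₁ : S₁ = P.filter (fun p => a₁ ≤ p.1 ∧ p.1 ≤ b₁ ∧ 0 ≤ p.2 ∧ p.2 ≤ c₁))
    (hS₂ : S₂ = P.filter (fun p => a₂ ≤ p.1 ∧ p.1 ≤ b₂ ∧ 0 ≤ p.2 ∧ p.2 ≤ c₂))
    (hr₁ : r ∈ S₁) (hr₂ : r ∈ S₂)
    (htop₁ : ∀ p ∈ S₁, p.2 ≤ r.2) (htop₂ : ∀ p ∈ S₂, p.2 ≤ r.2)
    (hcard : S₁.card = S₂.card)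
    (hcnt : (S₁.filter fun p => p.1 < r.1).card = (S₂.filter fun p => p.1 < r.1).card) :
    S₁ = S₂ := by
  have hm₁ : ∀ p, p ∈ S₁ ↔ p ∈ P ∧ a₁ ≤ p.1 ∧ p.1 ≤ b₁ ∧ 0 ≤ p.2 ∧ p.2 ≤ c₁ := by
    intro p; rw [hS₁, Finset.mem_filter]
  have hm₂ : ∀ p, p ∈ S₂ ↔ p ∈ P ∧ a₂ ≤ p.1 ∧ p.1 ≤ b₂ ∧ 0 ≤ p.2 ∧ p.2 ≤ c₂ := by
    intro p; rw [hS₂, Finset.mem_filter]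
  have hsub₁ : S₁ ⊆ P := fun p hp => ((hm₁ p).mp hp).1
  have hsub₂ : S₂ ⊆ P := fun p hp => ((hm₂ p).mp hp).1
  have hrP : r ∈ P := hsub₁ hr₁
  obtain ⟨hrP', ha₁, hb₁, _, hc₁⟩ := (hm₁ r).mp hr₁
  obtain ⟨_, ha₂, hb₂, _, hc₂⟩ := (hm₂ r).mp hr₂
  -- x-coordinate uniqueness within P
  have hxinj : ∀ p ∈ P, ∀ q ∈ P, p.1 = q.1 → p = q := by
    intro p hp q hq h
    by_contra hne
    exact (hgen p hp q hq hne).1 h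
  -- Left ground set
  set Gleft := P.filter (fun p => p.2 ≤ r.2 ∧ p.1 < r.1) with hGL
  set Gright := P.filter (fun p => p.2 ≤ r.2 ∧ r.1 < p.1) with hGR
  set L₁ := S₁.filter (fun p => p.1 < r.1) with hL₁
  set L₂ := S₂.filter (fun p => p.1 < r.1) with hL₂
  set R₁ := S₁.filter (fun p => r.1 < p.1) with hR₁
  set R₂ := S₂.filter (fun p => r.1 < p.1) with hR₂
  have hLG₁ : L₁ ⊆ Gleft := by
    intro p hp
    rw [hL₁, Finset.mem_filter] at hp
    rw [hGL, Finset.mem_filter]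
    exact ⟨hsub₁ hp.1, htop₁ p hp.1, hp.2⟩
  have hLG₂ : L₂ ⊆ Gleft := by
    intro p hp
    rw [hL₂, Finset.mem_filter] at hp
    rw [hGL, Finset.mem_filter]
    exact ⟨hsub₂ hp.1, htop₂ p hp.1, hp.2⟩
  have hRG₁ : R₁ ⊆ Gright := by
    intro p hp
    rw [hR₁, Finset.mem_filter] at hp
    rw [hGR, Finset.mem_filter]
    exact ⟨hsub₁ hp.1, htop₁ p hp.1, hp.2⟩
  have hRG₂ : R₂ ⊆ Gright := by
    intro p hp
    rw [hR₂, Finset.mem_filter] at hp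
    rw [hGR, Finset.mem_filter]
    exact ⟨hsub₂ hp.1, htop₂ p hp.1, hp.2⟩
  have hLclosed : ∀ (S : Finset (ℝ × ℝ)) (a b c : ℝ),
      S = P.filter (fun p => a ≤ p.1 ∧ p.1 ≤ b ∧ 0 ≤ p.2 ∧ p.2 ≤ c) →
      a ≤ r.1 → r.1 ≤ b → r.2 ≤ c →
      ∀ p ∈ S.filter (fun p => p.1 < r.1), ∀ q ∈ Gleft, p.1 < q.1 →
        q ∈ S.filter (fun p => p.1 < r.1) := by
    intro S a b c hS ha hb hc p hp q hq hlt
    rw [Finset.mem_filter] at hp hq ⊢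
    rw [hS, Finset.mem_filter] at hp ⊢
    refine ⟨⟨hq.1, ?_, ?_, le_of_lt (hpos q hq.1), le_trans hq.2.1 hc⟩, hq.2.2⟩
    · exact le_of_lt (lt_of_le_of_lt hp.1.2.1 hlt)
    · exact le_trans (le_of_lt hq.2.2) hb
  have hRclosed : ∀ (S : Finset (ℝ × ℝ)) (a b c : ℝ),
      S = P.filter (fun p => a ≤ p.1 ∧ p.1 ≤ b ∧ 0 ≤ p.2 ∧ p.2 ≤ c) →
      a ≤ r.1 → r.1 ≤ b → r.2 ≤ c →
      ∀ p ∈ S.filter (fun p => r.1 < p.1), ∀ q ∈ Gright, (-p.1) < (-q.1) →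
        q ∈ S.filter (fun p => r.1 < p.1) := by
    intro S a b c hS ha hb hc p hp q hq hlt
    have hlt' : q.1 < p.1 := by linarith
    rw [Finset.mem_filter] at hp hq ⊢
    rw [hS, Finset.mem_filter] at hp ⊢
    refine ⟨⟨hq.1, ?_, ?_, le_of_lt (hpos q hq.1), le_trans hq.2.1 hc⟩, hq.2.2⟩
    · exact le_trans ha (le_of_lt hq.2.2)
    · exact le_trans (le_of_lt hlt') hp.1.2.2.1
  have hxGL : ∀ p ∈ Gleft, ∀ q ∈ Gleft, p ≠ q → p.1 ≠ q.1 := by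
    intro p hp q hq hne
    exact (hgen p (Finset.filter_subset _ _ hp) q (Finset.filter_subset _ _ hq) hne).1
  have hxGR : ∀ p ∈ Gright, ∀ q ∈ Gright, p ≠ q → (-p.1) ≠ (-q.1) := by
    intro p hp q hq hne h
    exact (hgen p (Finset.filter_subset _ _ hp) q (Finset.filter_subset _ _ hq) hne).1
      (by linarith)
  have hLeq : L₁ = L₂ :=
    seg_eq (fun p => p.1) hLG₁ hLG₂
      (hLclosed S₁ a₁ b₁ c₁ hS₁ ha₁ hb₁ hc₁)
      (hLclosed S₂ a₂ b₂ c₂ hS₂ ha₂ hb₂ hc₂)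
      hxGL hcnt
  -- card of right parts
  have hsplit : ∀ (S : Finset (ℝ × ℝ)), S ⊆ P → r ∈ S →
      S.card = (S.filter (fun p => p.1 < r.1)).card + ((S.filter (fun p => r.1 < p.1)).card + 1) := by
    intro S hSP hrS
    have h1 : (S.filter (fun p => ¬ p.1 < r.1)) = insert r (S.filter (fun p => r.1 < p.1)) := by
      ext p
      rw [Finset.mem_insert, Finset.mem_filter, Finset.mem_filter]
      constructor
      · rintro ⟨hpS, hnl⟩
        rcases lt_or_eq_of_le (not_lt.mp hnl) with h | h
        · exact Or.inr ⟨hpS, h⟩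
        · exact Or.inl (hxinj p (hSP hpS) r hrP h.symm)
      · rintro (rfl | ⟨hpS, h⟩)
        · exact ⟨hrS, lt_irrefl _⟩
        · exact ⟨hpS, not_lt.mpr (le_of_lt h)⟩
    have h2 : r ∉ S.filter (fun p => r.1 < p.1) := by
      rw [Finset.mem_filter]; rintro ⟨_, h⟩; exact lt_irrefl _ h
    have := Finset.card_filter_add_card_filter_not (s := S)
      (p := fun p => p.1 < r.1)
    rw [h1, Finset.card_insert_of_notMem h2] at this
    omega
  have hc1 := hsplit S₁ hsub₁ hr₁
  have hc2 := hsplit S₂ hsub₂ hr₂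
  have hRcard : R₁.card = R₂.card := by
    have h := congrArg Finset.card hLeq
    rw [hL₁, hL₂] at h
    rw [hR₁, hR₂]
    omega
  have hReq : R₁ = R₂ :=
    seg_eq (fun p => -p.1) hRG₁ hRG₂
      (hRclosed S₁ a₁ b₁ c₁ hS₁ ha₁ hb₁ hc₁)
      (hRclosed S₂ a₂ b₂ c₂ hS₂ ha₂ hb₂ hc₂)
      hxGR hRcard
  -- conclude
  have hsubset : ∀ (S T : Finset (ℝ × ℝ)), S ⊆ P → T ⊆ P → r ∈ T →
      S.filter (fun p => p.1 < r.1) ⊆ T → S.filter (fun p => r.1 < p.1) ⊆ T →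
      S ⊆ T := by
    intro S T hSP hTP hrT hL hR p hpS
    rcases lt_trichotomy p.1 r.1 with h | h | h
    · exact hL (Finset.mem_filter.mpr ⟨hpS, h⟩)
    · rw [hxinj p (hSP hpS) r hrP h]; exact hrT
    · exact hR (Finset.mem_filter.mpr ⟨hpS, h⟩)
  apply Finset.Subset.antisymm
  · refine hsubset S₁ S₂ hsub₁ hsub₂ hr₂ ?_ ?_
    · rw [← hL₁, hLeq, hL₂]; exact Finset.filter_subset _ _
    · rw [← hR₁, hReq, hR₂]; exact Finset.filter_subset _ _
  · refine hsubset S₂ S₁ hsub₂ hsub₁ hr₁ ?_ ?_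
    · rw [← hL₂, ← hLeq, hL₁]; exact Finset.filter_subset _ _
    · rw [← hR₂, ← hReq, hR₁]; exact Finset.filter_subset _ _

/-- For a set `P` of `n` points in the plane, all strictly above the
x-axis and in general position, the number of distinct subsets of `P` of size
exactly `k ≥ 1` realizable as the intersection of `P` with an axis-parallel
rectangle `[a,b] × [0,c]` (bottom edge on the x-axis) is `O(n · k²)`. -/
theorem stmt_0 :
    ∃ C : ℕ, 0 < C ∧
      ∀ (n k : ℕ), 1 ≤ k →
        ∀ P : Finset (ℝ × ℝ), P.card = n →
          (∀ p ∈ P, 0 < p.2) →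
          (∀ p ∈ P, ∀ q ∈ P, p ≠ q → p.1 ≠ q.1 ∧ p.2 ≠ q.2) →
          {S : Finset (ℝ × ℝ) | S.card = k ∧
              ∃ a b c : ℝ,
                S = P.filter (fun p => a ≤ p.1 ∧ p.1 ≤ b ∧ 0 ≤ p.2 ∧ p.2 ≤ c)}.ncard
            ≤ C * n * k ^ 2 := by
  refine ⟨1, one_pos, ?_⟩
  intro n k hk P hPcard hpos hgen
  set T : Set (Finset (ℝ × ℝ)) := {S | S.card = k ∧
      ∃ a b c : ℝ, S = P.filter (fun p => a ≤ p.1 ∧ p.1 ≤ b ∧ 0 ≤ p.2 ∧ p.2 ≤ c)} with hT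
  set f : Finset (ℝ × ℝ) → (ℝ × ℝ) × ℕ :=
    fun S => (topPt S, (S.filter fun p => p.1 < (topPt S).1).card) with hf
  have hbasic : ∀ S ∈ T, S.Nonempty ∧ topPt S ∈ S ∧ S ⊆ P := by
    rintro S ⟨hScard, a, b, c, hS⟩
    have hne : S.Nonempty := Finset.card_pos.mp (by omega)
    exact ⟨hne, topPt_mem hne, hS ▸ Finset.filter_subset _ _⟩
  have hmap : ∀ S ∈ T, f S ∈ (↑(P ×ˢ Finset.range k) : Set ((ℝ × ℝ) × ℕ)) := by
    intro S hS
    obtain ⟨hne, hrS, hSP⟩ := hbasic S hS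
    obtain ⟨hScard, _⟩ := hS
    simp only [Finset.coe_product, Set.mem_prod, Finset.mem_coe, Finset.mem_range, hf]
    refine ⟨hSP hrS, ?_⟩
    have hsub : S.filter (fun p => p.1 < (topPt S).1) ⊆ S.erase (topPt S) := by
      intro p hp
      rw [Finset.mem_filter] at hp
      rw [Finset.mem_erase]
      refine ⟨?_, hp.1⟩
      intro h; rw [h] at hp; exact lt_irrefl _ hp.2
    have := Finset.card_le_card hsub
    rw [Finset.card_erase_of_mem hrS, hScard] at this
    omega
  have hinj : Set.InjOn f T := by
    intro S₁ hS₁ S₂ hS₂ heq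
    obtain ⟨hne₁, hr₁, _⟩ := hbasic S₁ hS₁
    obtain ⟨hne₂, hr₂, _⟩ := hbasic S₂ hS₂
    obtain ⟨hcard₁, a₁, b₁, c₁, hSe₁⟩ := hS₁
    obtain ⟨hcard₂, a₂, b₂, c₂, hSe₂⟩ := hS₂
    have htopeq : topPt S₁ = topPt S₂ := congrArg Prod.fst heq
    have hcnteq : (S₁.filter fun p => p.1 < (topPt S₁).1).card
        = (S₂.filter fun p => p.1 < (topPt S₂).1).card := congrArg Prod.snd heq
    exact realized_eq hpos hgen hSe₁ hSe₂ hr₁ (htopeq ▸ hr₂)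
      (fun p hp => le_topPt hne₁ hp)
      (fun p hp => htopeq ▸ le_topPt hne₂ hp)
      (by omega) (htopeq ▸ hcnteq)
  calc T.ncard = (f '' T).ncard := (Set.ncard_image_of_injOn hinj).symm
    _ ≤ (↑(P ×ˢ Finset.range k) : Set ((ℝ × ℝ) × ℕ)).ncard := by
        apply Set.ncard_le_ncard
        · rw [Set.image_subset_iff]; exact hmap
        · exact (P ×ˢ Finset.range k).finite_toSet
    _ = n * k := by
        rw [Set.ncard_coe_finset, Finset.card_product, Finset.card_range, hPcard]
    _ ≤ 1 * n * k ^ 2 := by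
        rw [one_mul]
        exact Nat.mul_le_mul le_rfl (Nat.le_self_pow two_ne_zero k)
end

section
/- Let T be a rooted tree and R a subset of its nodes with |R| ≥ 2. Then the set of all nodes that arise as the least common ancestor of some pair of distinct nodes in R, and which are not themselves in R, has size at most |R| − 1. -/
/-!
Adding one node `r` to `R` creates at most one new least common ancestor outside the set:
the candidates `r ⊔ x` (`x ∈ R`) are ancestors of `r`, so they form a chain with a least
element `m = r ⊔ x₀`, and every other candidate `r ⊔ x` equals `x₀ ⊔ x`, an old one.
Induction on `R` then gives the bound `|R| - 1`.
-/

namespace Finset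

variable {α : Type*} [SemilatticeSup α]

/-- With `v ≤ u` read as "`u` is an ancestor of `v`", `u ⊔ v` is the least common ancestor. -/
def pairSupsOutside (R : Finset α) : Set α :=
  {w | w ∉ R ∧ ∃ u ∈ R, ∃ v ∈ R, u ≠ v ∧ w = u ⊔ v}

theorem pairSupsOutside_finite (R : Finset α) : (pairSupsOutside R).Finite :=
  ((R : Set α).toFinite.image2 (· ⊔ ·) (R : Set α).toFinite).subset
    fun _ ⟨_, _, hu, _, hv, _, hw⟩ => ⟨_, hu, _, hv, hw.symm⟩

theorem pairSupsOutside_singleton (r : α) : pairSupsOutside {r} = ∅ :=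
  Set.eq_empty_of_forall_notMem fun _ ⟨_, _, hu, _, hv, huv, _⟩ =>
    huv ((mem_singleton.1 hu).trans (mem_singleton.1 hv).symm)

variable (htree : ∀ v : α, IsChain (· ≤ ·) {u : α | v ≤ u})
include htree

theorem exists_sup_le_sup (r : α) {s : Finset α} (hs : s.Nonempty) :
    ∃ x₀ ∈ s, ∀ x ∈ s, r ⊔ x₀ ≤ r ⊔ x := by
  obtain ⟨x₀, hx₀, hmin⟩ := s.exists_minimalFor (r ⊔ ·) hs
  refine ⟨x₀, hx₀, fun x hx => ?_⟩
  rcases (htree r).total (le_sup_left : r ≤ r ⊔ x₀) (le_sup_left : r ≤ r ⊔ x) with h | h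
  · exact h
  · exact hmin hx h

theorem sup_eq_or_sup_eq_of_sup_le_sup {r x₀ x : α} (h : r ⊔ x₀ ≤ r ⊔ x) :
    r ⊔ x = r ⊔ x₀ ∨ r ⊔ x = x₀ ⊔ x := by
  rcases (htree x₀).total (le_sup_right : x₀ ≤ r ⊔ x₀) (le_sup_left : x₀ ≤ x₀ ⊔ x) with hm | hm
  · refine Or.inr (le_antisymm ?_ (sup_le (le_sup_right.trans h) le_sup_right))
    exact sup_le (le_sup_left.trans hm) le_sup_right
  · exact Or.inl (le_antisymm (sup_le le_sup_left (le_sup_right.trans hm)) h)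

theorem exists_pairSupsOutside_insert_subset [DecidableEq α] (r : α) {s : Finset α}
    (hs : s.Nonempty) :
    ∃ m, pairSupsOutside (insert r s) ⊆ insert m (pairSupsOutside s) := by
  obtain ⟨x₀, hx₀, hmin⟩ := exists_sup_le_sup htree r hs
  refine ⟨r ⊔ x₀, fun w ⟨hw, u, hu, v, hv, huv, hwuv⟩ => ?_⟩
  have hws : w ∉ s := fun h => hw (mem_insert_of_mem h)
  suffices ∀ x ∈ s, w = r ⊔ x → w = r ⊔ x₀ ∨ w ∈ pairSupsOutside s by
    rw [mem_insert] at hu hv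
    rcases hu with rfl | hu
    · exact this v (hv.resolve_left huv.symm) hwuv
    rcases hv with rfl | hv
    · exact this u hu (hwuv.trans (sup_comm u v))
    · exact Or.inr ⟨hws, u, hu, v, hv, huv, hwuv⟩
  rintro x hx rfl
  refine (sup_eq_or_sup_eq_of_sup_le_sup htree (hmin x hx)).imp id
    fun hw₀ => ⟨hws, x₀, hx₀, x, hx, fun h => hws ?_, hw₀⟩
  rwa [hw₀, h, sup_idem]

theorem ncard_pairSupsOutside_le (R : Finset α) : (pairSupsOutside R).ncard ≤ R.card - 1 := by
  classical
  induction R using Finset.induction_on with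
  | empty => simp [pairSupsOutside]
  | insert r s hr ih =>
    rw [card_insert_of_notMem hr, Nat.add_sub_cancel]
    obtain rfl | hs := s.eq_empty_or_nonempty
    · simp [pairSupsOutside_singleton]
    obtain ⟨m, hsub⟩ := exists_pairSupsOutside_insert_subset htree r hs
    calc (pairSupsOutside (insert r s)).ncard
        ≤ (insert m (pairSupsOutside s)).ncard :=
          Set.ncard_le_ncard hsub ((pairSupsOutside_finite s).insert m)
      _ ≤ (pairSupsOutside s).ncard + 1 := Set.ncard_insert_le _ _
      _ ≤ s.card := by have := hs.card_pos; omega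

end Finset

theorem stmt_1_general {V : Type*} [SemilatticeSup V]
    (htree : ∀ v : V, IsChain (· ≤ ·) {u : V | v ≤ u})
    (R : Finset V) :
    {w : V | w ∉ R ∧ ∃ u ∈ R, ∃ v ∈ R, u ≠ v ∧ w = u ⊔ v}.ncard ≤ R.card - 1 :=
  Finset.ncard_pairSupsOutside_le htree R

/-- In a rooted tree (modeled as a finite sup-semilattice in which
`v ≤ u` means "u is an ancestor of v", so that the ancestors of any node form a
chain and `u ⊔ v` is the least common ancestor of `u` and `v`), for any subset
`R` of nodes with `|R| ≥ 2`, the set of nodes that are the LCA of some pair of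
distinct nodes of `R` but are not themselves in `R` has size at most `|R| - 1`. -/
theorem stmt_1 {V : Type*} [Fintype V] [SemilatticeSup V]
    (htree : ∀ v : V, IsChain (· ≤ ·) {u : V | v ≤ u})
    (R : Finset V) (hR : 2 ≤ R.card) :
    {w : V | w ∉ R ∧ ∃ u ∈ R, ∃ v ∈ R, u ≠ v ∧ w = u ⊔ v}.ncard ≤ R.card - 1 :=
  stmt_1_general htree R
end

section
/- Let H = (V, E) be a hypergraph with a capacity function c : E → ℤ≥1, and let x : V → [0,1] be a fractional solution satisfying ∑_{v ∈ e} x_v ≤ c(e) for every hyperedge e. Form a random set S by including each vertex v independently with probability x_v/2. Then for any hyperedge e with c(e) = k and any subset h ⊆ e with |h| = k+1, the probability that S ∩ e = h is at least (∏_{v ∈ h} x_v) / (2·(2e)^k). -/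
open Finset

lemma aux_exp_bound (t : ℝ) (h0 : 0 ≤ t) (h1 : t ≤ 1) : Real.exp (-t) ≤ 1 - t / 2 := by
  have hp := Real.add_one_le_exp t
  have he : Real.exp (-t) * Real.exp t = 1 := by
    rw [← Real.exp_add]; simp
  have hpos := Real.exp_pos (-t)
  nlinarith [mul_le_mul_of_nonneg_left hp hpos.le, sq_nonneg t]

/-- Let `H = (V,E)` be a hypergraph with capacities `c : E → ℤ≥1` and a
fractional solution `x : V → [0,1]` with `∑_{v ∈ e} x v ≤ c e` for every hyperedge.
Sample each vertex independently with probability `x v / 2`. For a hyperedge `e` of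
capacity `k` and `h ⊆ e` with `|h| = k + 1`, the probability that exactly the vertices
of `h` among `e` are sampled — which by independence equals
`(∏_{v ∈ h} x v / 2) · ∏_{v ∈ e \ h} (1 - x v / 2)` — is at least
`(∏_{v ∈ h} x v) / (2 · (2e)^k)`. -/
theorem stmt_2 {V : Type*} [DecidableEq V]
    (E : Finset (Finset V)) (cap : Finset V → ℕ) (hcap : ∀ e ∈ E, 1 ≤ cap e)
    (x : V → ℝ) (hx : ∀ v, x v ∈ Set.Icc (0 : ℝ) 1)
    (hfeas : ∀ e ∈ E, ∑ v ∈ e, x v ≤ (cap e : ℝ))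
    (e : Finset V) (he : e ∈ E) (k : ℕ) (hk : cap e = k)
    (h : Finset V) (hsub : h ⊆ e) (hcard : h.card = k + 1) :
    (∏ v ∈ h, x v) / (2 * (2 * Real.exp 1) ^ k)
      ≤ (∏ v ∈ h, (x v / 2)) * ∏ v ∈ e \ h, (1 - x v / 2) := by
  have hP : (0 : ℝ) ≤ ∏ v ∈ h, x v := prod_nonneg fun v _ => (hx v).1
  -- sum over e \ h is at most k
  have hsum : ∑ v ∈ e \ h, x v ≤ (k : ℝ) := by
    calc ∑ v ∈ e \ h, x v ≤ ∑ v ∈ e, x v :=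
          sum_le_sum_of_subset_of_nonneg (sdiff_subset) (fun v hv _ => (hx v).1)
      _ ≤ (cap e : ℝ) := hfeas e he
      _ = (k : ℝ) := by rw [hk]
  -- lower bound the product of (1 - x v / 2)
  have hprod : Real.exp (-(k : ℝ)) ≤ ∏ v ∈ e \ h, (1 - x v / 2) := by
    calc Real.exp (-(k : ℝ)) ≤ Real.exp (-(∑ v ∈ e \ h, x v)) := by
          exact Real.exp_le_exp.mpr (by linarith)
      _ = ∏ v ∈ e \ h, Real.exp (-(x v)) := by
          rw [← Real.exp_sum]; congr 1; rw [← Finset.sum_neg_distrib]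
      _ ≤ ∏ v ∈ e \ h, (1 - x v / 2) :=
          Finset.prod_le_prod (fun v _ => (Real.exp_pos _).le)
            (fun v _ => aux_exp_bound (x v) (hx v).1 (hx v).2)
  -- rewrite the left product
  have hsplit : ∏ v ∈ h, (x v / 2) = (∏ v ∈ h, x v) / 2 ^ (k + 1) := by
    rw [Finset.prod_div_distrib, Finset.prod_const, hcard]
  have hek : Real.exp (-(k : ℝ)) = (Real.exp 1 ^ k)⁻¹ := by
    rw [Real.exp_neg, ← Real.exp_one_pow]
  have h2e : 2 * (2 * Real.exp 1) ^ k = 2 ^ (k + 1) * Real.exp 1 ^ k := by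
    rw [mul_pow, pow_succ]; ring
  have hexp_pos : (0:ℝ) < Real.exp 1 ^ k := pow_pos (Real.exp_pos 1) k
  have h2pos : (0:ℝ) < (2:ℝ) ^ (k+1) := by positivity
  calc (∏ v ∈ h, x v) / (2 * (2 * Real.exp 1) ^ k)
      = ((∏ v ∈ h, x v) / 2 ^ (k + 1)) * Real.exp (-(k : ℝ)) := by
        rw [h2e, hek]; field_simp
    _ ≤ ((∏ v ∈ h, x v) / 2 ^ (k + 1)) * ∏ v ∈ e \ h, (1 - x v / 2) :=
        mul_le_mul_of_nonneg_left hprod (by positivity)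
    _ = (∏ v ∈ h, (x v / 2)) * ∏ v ∈ e \ h, (1 - x v / 2) := by rw [hsplit]
end

section
/- Let H = (V, E) be a hypergraph with uniform hyperedge capacities all equal to k. Suppose one has an algorithm that, on any vertex-induced sub-hypergraph, returns an independent set (a set meeting each hyperedge in at most one vertex) of weight at least 1/α times the maximum weight fractional independent set. Then iterating this algorithm k times — each time removing the returned set and recursing on the remaining vertices, and outputting the union — yields a valid solution (every hyperedge contains at most k output vertices) whose weight is at least 1/(2α) times the weight of the optimal solution with capacities k. -/
/-!
Write `Dᵢ` for the union of the first `i` returned sets and `Aᵢ = alg (V \ Dᵢ)`.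
Each round adds at most one vertex to every hyperedge, so `D k` respects the capacities.
For the weight, the key fact is that a capacity-`k` solution `Y`, scaled by `1/k`, is a feasible
fractional independent set. Applied to `X \ Dᵢ` for `i < k` this gives
`w X - w (D k) ≤ w (X \ Dᵢ) ≤ k α w Aᵢ`, and summing over the `k` rounds,
`w X ≤ (1 + α) w (D k)`. Applied to `Aᵢ` itself (capacity `1`) it gives `w Aᵢ ≤ α w Aᵢ`,
hence `(1 + α) w (D k) ≤ 2 α w (D k)`.
-/

open Finset

section

variable {V : Type*} [DecidableEq V]

def IsFracIndep (E : Finset (Finset V)) (S : Finset V) (x : V → ℝ) : Prop :=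
  (∀ v, 0 ≤ x v ∧ x v ≤ 1) ∧ (∀ v, v ∉ S → x v = 0) ∧
    ∀ e ∈ E, ∑ v ∈ e, x v ≤ 1

lemma isFracIndep_ite_mem_inv {E : Finset (Finset V)} {S Y : Finset V} (hYS : Y ⊆ S) {k : ℕ}
    (hk : 1 ≤ k) (hY : ∀ e ∈ E, #(e ∩ Y) ≤ k) :
    IsFracIndep E S (fun v => if v ∈ Y then (k : ℝ)⁻¹ else 0) := by
  have hk' : (1 : ℝ) ≤ k := by exact_mod_cast hk
  refine ⟨fun v => ?_, fun v hv => if_neg fun hvY => hv (hYS hvY), fun e he => ?_⟩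
  · dsimp only
    split_ifs
    · exact ⟨by positivity, inv_le_one_of_one_le₀ hk'⟩
    · simp
  · rw [sum_ite_mem, sum_const, nsmul_eq_mul, ← div_eq_mul_inv, div_le_one (by positivity)]
    exact_mod_cast hY e he

lemma sum_le_mul_of_forall_isFracIndep [Fintype V] {E : Finset (Finset V)} {w : V → ℝ}
    {S Y : Finset V} {B : ℝ} (hB : ∀ x, IsFracIndep E S x → ∑ v, w v * x v ≤ B)
    (hYS : Y ⊆ S) {k : ℕ} (hk : 1 ≤ k) (hY : ∀ e ∈ E, #(e ∩ Y) ≤ k) :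
    ∑ v ∈ Y, w v ≤ k * B := by
  have hk' : (0 : ℝ) < k := by exact_mod_cast hk
  have h := hB _ (isFracIndep_ite_mem_inv hYS hk hY)
  simp only [mul_ite, mul_zero, sum_ite_mem, univ_inter, ← sum_mul] at h
  rwa [← div_eq_mul_inv, div_le_iff₀ hk', mul_comm] at h

variable {D A : ℕ → Finset V}

lemma card_inter_le_of_iterate (hD0 : D 0 = ∅) (hDs : ∀ i, D (i + 1) = D i ∪ A i)
    {e : Finset V} (hA : ∀ i, #(e ∩ A i) ≤ 1) (n : ℕ) :
    #(e ∩ D n) ≤ n := by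
  induction n with
  | zero => simp [hD0]
  | succ n ih =>
    rw [hDs, inter_union_distrib_left]
    exact (card_union_le _ _).trans (add_le_add ih (hA n))

lemma monotone_of_iterate (hDs : ∀ i, D (i + 1) = D i ∪ A i) : Monotone D :=
  monotone_nat_of_le_succ fun n => (hDs n).symm ▸ subset_union_left

lemma sum_eq_sum_range_of_iterate (hD0 : D 0 = ∅) (hDs : ∀ i, D (i + 1) = D i ∪ A i)
    (hdisj : ∀ i, Disjoint (D i) (A i)) (w : V → ℝ) (n : ℕ) :
    ∑ v ∈ D n, w v = ∑ i ∈ range n, ∑ v ∈ A i, w v := by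
  induction n with
  | zero => simp [hD0]
  | succ n ih => rw [hDs, sum_union (hdisj n), sum_range_succ, ih]

end

theorem stmt_11_general {V : Type*} [Fintype V] [DecidableEq V]
    (E : Finset (Finset V)) (w : V → ℝ) (hw : ∀ v, 0 ≤ w v)
    (k : ℕ) (hk : 1 ≤ k) (α : ℝ)
    (alg : Finset V → Finset V)
    (halg_sub : ∀ S, alg S ⊆ S)
    (halg_ind : ∀ S, ∀ e ∈ E, (e ∩ alg S).card ≤ 1)
    (halg_apx : ∀ S : Finset V, ∀ x : V → ℝ,
      (∀ v, 0 ≤ x v ∧ x v ≤ 1) → (∀ v, v ∉ S → x v = 0) →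
      (∀ e ∈ E, ∑ v ∈ e, x v ≤ 1) →
      ∑ v, w v * x v ≤ α * ∑ v ∈ alg S, w v)
    (D : ℕ → Finset V) (hD0 : D 0 = ∅)
    (hDs : ∀ i, D (i + 1) = D i ∪ alg (Finset.univ \ D i)) :
    (∀ e ∈ E, (e ∩ D k).card ≤ k) ∧
      (∀ X : Finset V, (∀ e ∈ E, (e ∩ X).card ≤ k) →
        ∑ v ∈ X, w v ≤ 2 * α * ∑ v ∈ D k, w v) := by
  refine ⟨fun e he => card_inter_le_of_iterate hD0 hDs (fun _ => halg_ind _ e he) k,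
    fun X hX => ?_⟩
  have hB i x (hx : IsFracIndep E (univ \ D i) x) := halg_apx _ x hx.1 hx.2.1 hx.2.2
  have hdisj i : Disjoint (D i) (alg (univ \ D i)) :=
    disjoint_left.mpr fun v hv hv' => (mem_sdiff.mp (halg_sub _ hv')).2 hv
  have hsum := sum_eq_sum_range_of_iterate hD0 hDs hdisj w k
  have hround i (hi : i ≤ k) :
      ∑ v ∈ X, w v - ∑ v ∈ D k, w v ≤ k * (α * ∑ v ∈ alg (univ \ D i), w v) := by
    have hcut : ∑ v ∈ X ∩ D i, w v ≤ ∑ v ∈ D k, w v :=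
      sum_le_sum_of_subset_of_nonneg (inter_subset_right.trans (monotone_of_iterate hDs hi))
        fun v _ _ => hw v
    have hrest := sum_le_mul_of_forall_isFracIndep (hB i)
      (sdiff_subset_sdiff (subset_univ X) le_rfl) hk
      fun e he => (card_le_card (inter_subset_inter_left sdiff_subset)).trans (hX e he)
    linarith [sum_inter_add_sum_sdiff X (D i) w]
  have hA_le i : ∑ v ∈ alg (univ \ D i), w v ≤ α * ∑ v ∈ alg (univ \ D i), w v := by
    simpa using sum_le_mul_of_forall_isFracIndep (hB i) (halg_sub _) le_rfl (halg_ind _)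
  have hk' : (0 : ℝ) < k := by exact_mod_cast hk
  have hgap : ∑ v ∈ X, w v - ∑ v ∈ D k, w v ≤ α * ∑ v ∈ D k, w v := by
    refine le_of_mul_le_mul_left ?_ hk'
    simpa [hsum, mul_sum] using
      card_nsmul_le_sum (range k) _ _ fun i hi => hround i (mem_range.mp hi).le
  have hD : ∑ v ∈ D k, w v ≤ α * ∑ v ∈ D k, w v := by
    rw [hsum, mul_sum]
    exact sum_le_sum fun i _ => hA_le i
  linarith

/-- Let `H = (V,E)` be a hypergraph with uniform capacities `k ≥ 1`
and nonnegative vertex weights. Suppose `alg` returns, on any induced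
sub-hypergraph (given by a vertex subset `S`), an independent set (meeting every
hyperedge at most once) of weight at least `1/α` times the value of any feasible
fractional independent set supported on `S`. Iterating `k` times, removing the
returned set each time and outputting the union `D k`, yields a set in which every
hyperedge has at most `k` vertices, of weight at least `1/(2α)` times the weight of
any feasible solution of the capacity-`k` problem. -/
theorem stmt_11 {V : Type*} [Fintype V] [DecidableEq V]
    (E : Finset (Finset V)) (w : V → ℝ) (hw : ∀ v, 0 ≤ w v)
    (k : ℕ) (hk : 1 ≤ k) (α : ℝ) (hα : 0 < α)
    (alg : Finset V → Finset V)
    (halg_sub : ∀ S, alg S ⊆ S)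
    (halg_ind : ∀ S, ∀ e ∈ E, (e ∩ alg S).card ≤ 1)
    (halg_apx : ∀ S : Finset V, ∀ x : V → ℝ,
      (∀ v, 0 ≤ x v ∧ x v ≤ 1) → (∀ v, v ∉ S → x v = 0) →
      (∀ e ∈ E, ∑ v ∈ e, x v ≤ 1) →
      ∑ v, w v * x v ≤ α * ∑ v ∈ alg S, w v)
    (D : ℕ → Finset V) (hD0 : D 0 = ∅)
    (hDs : ∀ i, D (i + 1) = D i ∪ alg (Finset.univ \ D i)) :
    (∀ e ∈ E, (e ∩ D k).card ≤ k) ∧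
      (∀ X : Finset V, (∀ e ∈ E, (e ∩ X).card ≤ k) →
        ∑ v ∈ X, w v ≤ 2 * α * ∑ v ∈ D k, w v) :=
  stmt_11_general E w hw k hk α alg halg_sub halg_ind halg_apx D hD0 hDs
end

section
/- Let P be a set of n points in the plane, no two on a common horizontal or vertical line. Define a graph G on P where p and q are adjacent if there is a skyline rectangle in the canonical family (built by recursively splitting P with horizontal median lines and taking all skyline rectangles containing at most k points, both above and below each split line) containing both p and q. Then G has O(n·k·log n) edges. -/
open Finset

namespace Stmt15Aux

noncomputable section
open Classical

/-- The witness rectangle determined by endpoints `p, q` at level line `y₀`. -/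
def Wf (Q : Finset (ℝ × ℝ)) (y₀ : ℝ) (p q : ℝ × ℝ) : Finset (ℝ × ℝ) :=
  Q.filter (fun z => min p.1 q.1 ≤ z.1 ∧ z.1 ≤ max p.1 q.1 ∧
    min y₀ p.2 ≤ z.2 ∧ z.2 ≤ max y₀ p.2)

def cond (Q : Finset (ℝ × ℝ)) (y₀ : ℝ) (k : ℕ) (p q : ℝ × ℝ) : Prop :=
  p ≠ q ∧ min y₀ p.2 ≤ q.2 ∧ q.2 ≤ max y₀ p.2 ∧ (Wf Q y₀ p q).card ≤ k

lemma side_bound (Q : Finset (ℝ × ℝ)) (y₀ : ℝ) (k : ℕ) (p : ℝ × ℝ)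
    (S : Finset (ℝ × ℝ)) (hS : S ⊆ Q)
    (hcond : ∀ q ∈ S, cond Q y₀ k p q)
    (hside : (∀ q ∈ S, p.1 < q.1) ∨ (∀ q ∈ S, q.1 < p.1)) :
    S.card ≤ k := by
  rcases S.eq_empty_or_nonempty with rfl | hne
  · simp
  rcases hside with hR | hL
  · obtain ⟨q', hq'S, hmax⟩ := S.exists_max_image (fun q => q.1) hne
    have h1 : S ⊆ Wf Q y₀ p q' := by
      intro r hr
      simp only [Wf, mem_filter]
      exact ⟨hS hr, le_trans (min_le_left _ _) (le_of_lt (hR r hr)),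
        le_trans (hmax r hr) (le_max_right _ _), (hcond r hr).2.1, (hcond r hr).2.2.1⟩
    exact le_trans (card_le_card h1) (hcond q' hq'S).2.2.2
  · obtain ⟨q', hq'S, hmin⟩ := S.exists_min_image (fun q => q.1) hne
    have h1 : S ⊆ Wf Q y₀ p q' := by
      intro r hr
      simp only [Wf, mem_filter]
      exact ⟨hS hr, le_trans (min_le_right _ _) (hmin r hr),
        le_trans (le_of_lt (hL r hr)) (le_max_left _ _), (hcond r hr).2.1, (hcond r hr).2.2.1⟩
    exact le_trans (card_le_card h1) (hcond q' hq'S).2.2.2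

lemma per_point (Q : Finset (ℝ × ℝ))
    (hdist : ∀ p ∈ Q, ∀ q ∈ Q, p ≠ q → p.1 ≠ q.1 ∧ p.2 ≠ q.2)
    (y₀ : ℝ) (k : ℕ) (p : ℝ × ℝ) (hp : p ∈ Q) :
    (Q.filter (cond Q y₀ k p)).card ≤ 2 * k := by
  have hsub : Q.filter (cond Q y₀ k p) ⊆
      (Q.filter (fun q => cond Q y₀ k p q ∧ p.1 < q.1)) ∪
      (Q.filter (fun q => cond Q y₀ k p q ∧ q.1 < p.1)) := by
    intro q hq
    rw [mem_filter] at hq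
    have hx : p.1 ≠ q.1 := (hdist p hp q hq.1 hq.2.1).1
    rcases lt_or_gt_of_ne hx with h | h
    · exact mem_union_left _ (mem_filter.mpr ⟨hq.1, hq.2, h⟩)
    · exact mem_union_right _ (mem_filter.mpr ⟨hq.1, hq.2, h⟩)
  refine le_trans (card_le_card hsub) (le_trans (card_union_le _ _) ?_)
  have hb1 : (Q.filter (fun q => cond Q y₀ k p q ∧ p.1 < q.1)).card ≤ k := by
    refine side_bound Q y₀ k p _ (filter_subset _ _) (fun q hq => (mem_filter.mp hq).2.1) ?_
    exact Or.inl (fun q hq => (mem_filter.mp hq).2.2)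
  have hb2 : (Q.filter (fun q => cond Q y₀ k p q ∧ q.1 < p.1)).card ≤ k := by
    refine side_bound Q y₀ k p _ (filter_subset _ _) (fun q hq => (mem_filter.mp hq).2.1) ?_
    exact Or.inr (fun q hq => (mem_filter.mp hq).2.2)
  omega

lemma W_le (Q : Finset (ℝ × ℝ)) (y₀ : ℝ) (k : ℕ) (a b c : ℝ) (p q : ℝ × ℝ)
    (hp : a ≤ p.1 ∧ p.1 ≤ b ∧ min y₀ c ≤ p.2 ∧ p.2 ≤ max y₀ c)
    (hq : a ≤ q.1 ∧ q.1 ≤ b ∧ min y₀ c ≤ q.2 ∧ q.2 ≤ max y₀ c)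
    (hcard : (Q.filter (fun z =>
      a ≤ z.1 ∧ z.1 ≤ b ∧ min y₀ c ≤ z.2 ∧ z.2 ≤ max y₀ c)).card ≤ k) :
    (Wf Q y₀ p q).card ≤ k := by
  refine le_trans (card_le_card ?_) hcard
  intro z hz
  simp only [Wf, mem_filter] at hz ⊢
  refine ⟨hz.1, le_trans (le_min hp.1 hq.1) hz.2.1,
    le_trans hz.2.2.1 (max_le hp.2.1 hq.2.1),
    le_trans (le_min (min_le_left _ _) hp.2.2.1) hz.2.2.2.1,
    le_trans hz.2.2.2.2 (max_le (le_max_left _ _) hp.2.2.2)⟩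

lemma level_bound (Q : Finset (ℝ × ℝ))
    (hdist : ∀ p ∈ Q, ∀ q ∈ Q, p ≠ q → p.1 ≠ q.1 ∧ p.2 ≠ q.2)
    (y₀ : ℝ) (k : ℕ) :
    ∃ D : Finset (Sym2 (ℝ × ℝ)),
      {e : Sym2 (ℝ × ℝ) | ∃ p ∈ Q, ∃ q ∈ Q, p ≠ q ∧ e = s(p, q) ∧
        ∃ a b c : ℝ,
          (a ≤ p.1 ∧ p.1 ≤ b ∧ min y₀ c ≤ p.2 ∧ p.2 ≤ max y₀ c) ∧
          (a ≤ q.1 ∧ q.1 ≤ b ∧ min y₀ c ≤ q.2 ∧ q.2 ≤ max y₀ c) ∧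
          (Q.filter (fun z =>
            a ≤ z.1 ∧ z.1 ≤ b ∧ min y₀ c ≤ z.2 ∧ z.2 ≤ max y₀ c)).card ≤ k} ⊆ ↑D ∧
      D.card ≤ 2 * k * Q.card := by
  refine ⟨((Q ×ˢ Q).filter (fun pq => cond Q y₀ k pq.1 pq.2)).image
    (fun pq => s(pq.1, pq.2)), ?_, ?_⟩
  · rintro e ⟨p, hp, q, hq, hpq, rfl, a, b, c, hrp, hrq, hcard⟩
    have hstrip : (min y₀ p.2 ≤ q.2 ∧ q.2 ≤ max y₀ p.2) ∨
        (min y₀ q.2 ≤ p.2 ∧ p.2 ≤ max y₀ q.2) := by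
      rcases le_total y₀ c with h | h
      · have hyp : y₀ ≤ p.2 := le_trans (le_of_eq (min_eq_left h).symm) hrp.2.2.1
        have hyq : y₀ ≤ q.2 := le_trans (le_of_eq (min_eq_left h).symm) hrq.2.2.1
        rcases le_total p.2 q.2 with h2 | h2
        · exact Or.inr ⟨le_trans (min_le_left _ _) hyp, le_trans h2 (le_max_right _ _)⟩
        · exact Or.inl ⟨le_trans (min_le_left _ _) hyq, le_trans h2 (le_max_right _ _)⟩
      · have hyp : p.2 ≤ y₀ := le_trans hrp.2.2.2 (le_of_eq (max_eq_left h))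
        have hyq : q.2 ≤ y₀ := le_trans hrq.2.2.2 (le_of_eq (max_eq_left h))
        rcases le_total p.2 q.2 with h2 | h2
        · exact Or.inl ⟨le_trans (min_le_right _ _) h2, le_trans hyq (le_max_left _ _)⟩
        · exact Or.inr ⟨le_trans (min_le_right _ _) h2, le_trans hyp (le_max_left _ _)⟩
    simp only [coe_image, Set.mem_image, mem_coe, mem_filter, mem_product]
    rcases hstrip with hs | hs
    · exact ⟨(p, q), ⟨⟨hp, hq⟩, hpq, hs.1, hs.2, W_le Q y₀ k a b c p q hrp hrq hcard⟩, rfl⟩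
    · exact ⟨(q, p), ⟨⟨hq, hp⟩, hpq.symm, hs.1, hs.2, W_le Q y₀ k a b c q p hrq hrp hcard⟩,
        (Sym2.eq_swap).symm⟩
  · have h1 : ((Q ×ˢ Q).filter (fun pq => cond Q y₀ k pq.1 pq.2)) ⊆
        Q.biUnion (fun p => (Q.filter (cond Q y₀ k p)).image (Prod.mk p)) := by
      rintro ⟨p, q⟩ hpq
      simp only [mem_filter, mem_product] at hpq
      simp only [mem_biUnion, mem_image, mem_filter]
      exact ⟨p, hpq.1.1, q, ⟨hpq.1.2, hpq.2⟩, rfl⟩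
    calc (((Q ×ˢ Q).filter (fun pq => cond Q y₀ k pq.1 pq.2)).image
          (fun pq => s(pq.1, pq.2))).card
        ≤ ((Q ×ˢ Q).filter (fun pq => cond Q y₀ k pq.1 pq.2)).card := card_image_le
      _ ≤ (Q.biUnion (fun p => (Q.filter (cond Q y₀ k p)).image (Prod.mk p))).card :=
          card_le_card h1
      _ ≤ ∑ p ∈ Q, ((Q.filter (cond Q y₀ k p)).image (Prod.mk p)).card := card_biUnion_le
      _ ≤ ∑ p ∈ Q, 2 * k := sum_le_sum (fun p hp =>
          le_trans card_image_le (per_point Q hdist y₀ k p hp))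
      _ = 2 * k * Q.card := by rw [sum_const, smul_eq_mul, mul_comm]


lemma recursion_bound (k : ℕ) (P : Finset (ℝ × ℝ))
    (hdist : ∀ p ∈ P, ∀ q ∈ P, p ≠ q → p.1 ≠ q.1 ∧ p.2 ≠ q.2)
    (Edges : Finset (ℝ × ℝ) → Set (Sym2 (ℝ × ℝ)))
    (h0 : Edges ∅ = ∅)
    (hrec : ∀ Q : Finset (ℝ × ℝ), Q ⊆ P → Q.Nonempty →
      ∃ y₀ : ℝ,
        2 * (Q.filter (fun p => p.2 < y₀)).card ≤ Q.card ∧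
        2 * (Q.filter (fun p => y₀ < p.2)).card ≤ Q.card ∧
        Edges Q =
          {e : Sym2 (ℝ × ℝ) | ∃ p ∈ Q, ∃ q ∈ Q, p ≠ q ∧ e = s(p, q) ∧
            ∃ a b c : ℝ,
              (a ≤ p.1 ∧ p.1 ≤ b ∧ min y₀ c ≤ p.2 ∧ p.2 ≤ max y₀ c) ∧
              (a ≤ q.1 ∧ q.1 ≤ b ∧ min y₀ c ≤ q.2 ∧ q.2 ≤ max y₀ c) ∧
              (Q.filter (fun z =>
                a ≤ z.1 ∧ z.1 ≤ b ∧ min y₀ c ≤ z.2 ∧ z.2 ≤ max y₀ c)).card ≤ k}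
          ∪ Edges (Q.filter (fun p => p.2 < y₀))
          ∪ Edges (Q.filter (fun p => y₀ < p.2))) :
    ∀ n : ℕ, ∀ Q : Finset (ℝ × ℝ), Q ⊆ P → Q.card ≤ n →
      (Edges Q).Finite ∧ (Edges Q).ncard ≤ 2 * k * Q.card * (Nat.log 2 Q.card + 1) := by
  intro n
  induction n with
  | zero =>
    intro Q hQP hQc
    have hQ : Q = ∅ := card_eq_zero.mp (Nat.le_zero.mp hQc)
    subst hQ
    rw [h0]
    exact ⟨Set.finite_empty, by simp⟩
  | succ n ih =>
    intro Q hQP hQc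
    rcases Q.eq_empty_or_nonempty with rfl | hne
    · rw [h0]; exact ⟨Set.finite_empty, by simp⟩
    obtain ⟨y₀, h1, h2, heq⟩ := hrec Q hQP hne
    have hpos : 1 ≤ Q.card := card_pos.mpr hne
    have hQ1P : Q.filter (fun p => p.2 < y₀) ⊆ P := (filter_subset _ _).trans hQP
    have hQ2P : Q.filter (fun p => y₀ < p.2) ⊆ P := (filter_subset _ _).trans hQP
    have hc1 : (Q.filter (fun p => p.2 < y₀)).card ≤ n := by omega
    have hc2 : (Q.filter (fun p => y₀ < p.2)).card ≤ n := by omega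
    obtain ⟨hf1, hb1⟩ := ih _ hQ1P hc1
    obtain ⟨hf2, hb2⟩ := ih _ hQ2P hc2
    obtain ⟨D, hD, hDcard⟩ := level_bound Q (fun p hp q hq => hdist p (hQP hp) q (hQP hq)) y₀ k
    have hfin : (Edges Q).Finite := by
      rw [heq]
      exact ((D.finite_toSet.subset hD).union hf1).union hf2
    refine ⟨hfin, ?_⟩
    have hnc : (Edges Q).ncard ≤ D.card +
        ((Edges (Q.filter (fun p => p.2 < y₀))).ncard +
         (Edges (Q.filter (fun p => y₀ < p.2))).ncard) := by
      have hA := Set.ncard_le_ncard hD D.finite_toSet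
      rw [Set.ncard_coe_finset] at hA
      rw [heq]
      refine le_trans (Set.ncard_union_le _ _) ?_
      refine le_trans (Nat.add_le_add_right (Set.ncard_union_le _ _) _) ?_
      omega
    -- disjointness and cardinal sum
    have hdisj : Disjoint (Q.filter (fun p => p.2 < y₀)) (Q.filter (fun p => y₀ < p.2)) := by
      rw [Finset.disjoint_left]
      intro a ha hb
      rw [mem_filter] at ha hb
      exact absurd (ha.2.trans hb.2) (lt_irrefl _)
    have hsum : (Q.filter (fun p => p.2 < y₀)).card + (Q.filter (fun p => y₀ < p.2)).card
        ≤ Q.card := by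
      rw [← card_union_of_disjoint hdisj]
      exact card_le_card (union_subset (filter_subset _ _) (filter_subset _ _))
    -- log facts
    set c₁ := (Q.filter (fun p => p.2 < y₀)).card
    set c₂ := (Q.filter (fun p => y₀ < p.2)).card
    set L := Nat.log 2 Q.card with hL
    have hlog : ∀ c : ℕ, 2 * c ≤ Q.card →
        2 * k * c * (Nat.log 2 c + 1) ≤ 2 * k * c * L := by
      intro c hc
      rcases Nat.eq_zero_or_pos c with rfl | hcpos
      · simp
      refine Nat.mul_le_mul_left _ ?_
      have e1 : Nat.log 2 (c * 2) = Nat.log 2 c + 1 := Nat.log_mul_base one_lt_two hcpos.ne'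
      calc Nat.log 2 c + 1 = Nat.log 2 (c * 2) := e1.symm
        _ ≤ L := Nat.log_mono_right (by omega)
    have t1 := hlog c₁ h1
    have t2 := hlog c₂ h2
    have hmul : 2 * k * c₁ * L + 2 * k * c₂ * L ≤ 2 * k * Q.card * L := by
      have : 2 * k * (c₁ + c₂) * L ≤ 2 * k * Q.card * L :=
        Nat.mul_le_mul_right _ (Nat.mul_le_mul_left _ hsum)
      calc 2 * k * c₁ * L + 2 * k * c₂ * L = 2 * k * (c₁ + c₂) * L := by ring
        _ ≤ 2 * k * Q.card * L := this
    calc (Edges Q).ncard ≤ D.card + ((Edges (Q.filter (fun p => p.2 < y₀))).ncard +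
         (Edges (Q.filter (fun p => y₀ < p.2))).ncard) := hnc
      _ ≤ 2 * k * Q.card + (2 * k * c₁ * (Nat.log 2 c₁ + 1) + 2 * k * c₂ * (Nat.log 2 c₂ + 1)) := by
          exact Nat.add_le_add hDcard (Nat.add_le_add hb1 hb2)
      _ ≤ 2 * k * Q.card + 2 * k * Q.card * L := by omega
      _ = 2 * k * Q.card * (L + 1) := by ring


end
end Stmt15Aux

theorem stmt_15 :
    ∃ C : ℝ, 0 < C ∧
      ∀ (k : ℕ), 1 ≤ k → ∀ (P : Finset (ℝ × ℝ)),
        (∀ p ∈ P, ∀ q ∈ P, p ≠ q → p.1 ≠ q.1 ∧ p.2 ≠ q.2) →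
        ∀ Edges : Finset (ℝ × ℝ) → Set (Sym2 (ℝ × ℝ)),
          Edges ∅ = ∅ →
          (∀ Q : Finset (ℝ × ℝ), Q ⊆ P → Q.Nonempty →
            ∃ y₀ : ℝ,
              2 * (Q.filter (fun p => p.2 < y₀)).card ≤ Q.card ∧
              2 * (Q.filter (fun p => y₀ < p.2)).card ≤ Q.card ∧
              Edges Q =
                {e : Sym2 (ℝ × ℝ) | ∃ p ∈ Q, ∃ q ∈ Q, p ≠ q ∧ e = s(p, q) ∧
                  ∃ a b c : ℝ,
                    (a ≤ p.1 ∧ p.1 ≤ b ∧ min y₀ c ≤ p.2 ∧ p.2 ≤ max y₀ c) ∧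
                    (a ≤ q.1 ∧ q.1 ≤ b ∧ min y₀ c ≤ q.2 ∧ q.2 ≤ max y₀ c) ∧
                    (Q.filter (fun z =>
                      a ≤ z.1 ∧ z.1 ≤ b ∧ min y₀ c ≤ z.2 ∧ z.2 ≤ max y₀ c)).card ≤ k}
                ∪ Edges (Q.filter (fun p => p.2 < y₀))
                ∪ Edges (Q.filter (fun p => y₀ < p.2))) →
          ((Edges P).ncard : ℝ) ≤ C * P.card * k * (Real.log P.card + 1) := by
  refine ⟨4, by norm_num, ?_⟩
  intro k hk P hdist Edges h0 hrec
  obtain ⟨-, hb⟩ := Stmt15Aux.recursion_bound k P hdist Edges h0 hrec P.card P subset_rfl le_rfl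
  have hb' : ((Edges P).ncard : ℝ) ≤ 2 * k * P.card * ((Nat.log 2 P.card : ℝ) + 1) := by
    exact_mod_cast Nat.cast_le.mpr hb
  have hL : ((Nat.log 2 P.card : ℝ)) + 1 ≤ 2 * (Real.log P.card + 1) := by
    rcases Nat.eq_zero_or_pos P.card with hc | hn
    · rw [hc]; norm_num
    · have hlogn : (0:ℝ) ≤ Real.log P.card := Real.log_nonneg (by exact_mod_cast hn)
      have h2n : ((2:ℝ)) ^ (Nat.log 2 P.card) ≤ P.card := by
        exact_mod_cast Nat.pow_log_le_self 2 hn.ne'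
      have hlog : Real.log ((2:ℝ) ^ (Nat.log 2 P.card)) ≤ Real.log P.card :=
        Real.log_le_log (by positivity) h2n
      rw [Real.log_pow] at hlog
      have h2 : (0.6931471803 : ℝ) < Real.log 2 := Real.log_two_gt_d9
      nlinarith [Nat.cast_nonneg (α := ℝ) (Nat.log 2 P.card)]
  have hnn : (0:ℝ) ≤ 2 * k * P.card := by positivity
  calc ((Edges P).ncard : ℝ) ≤ 2 * k * P.card * ((Nat.log 2 P.card : ℝ) + 1) := hb'
    _ ≤ 2 * k * P.card * (2 * (Real.log P.card + 1)) := mul_le_mul_of_nonneg_left hL hnn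
    _ = 4 * P.card * k * (Real.log P.card + 1) := by ring
end

section
/- Let G = (V, E) be a graph. Place a distinct point p_v on the unit circle for each vertex v ∈ V, and for each edge uv ∈ E, a triangle T_{uv} with vertices p_u, p_v, and a third point inside the unit disk, such that T_{uv} ∩ {p_w : w ∈ V} = {p_u, p_v}. Assign each triangle capacity 1. Then a subset S ⊆ V is an independent set in G if and only if the corresponding point set {p_v : v ∈ S} is a feasible solution to the packing problem, i.e., every triangle T_{uv} contains at most one point of {p_v : v ∈ S}. -/
/-- Let `G = (V,E)` be a graph. Place a distinct point `p v` on the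
unit circle for each vertex `v`, and for each edge `uv` a triangle `T u v` with
vertices `p u`, `p v` and a third point strictly inside the unit disk, such that
`T u v` meets the placed points exactly in `{p u, p v}`; each triangle has
capacity `1`. Then `S ⊆ V` is an independent set of `G` iff the point set
`{p v : v ∈ S}` is feasible for the packing problem, i.e. every triangle contains
at most one selected point. -/
theorem stmt_16 {V : Type*} [Fintype V] [DecidableEq V] (G : SimpleGraph V)
    (p : V → ℝ × ℝ) (hinj : Function.Injective p)
    (hcirc : ∀ v, ‖p v‖ = 1)
    (T : V → V → Set (ℝ × ℝ))
    (hTri : ∀ u v, G.Adj u v →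
      ∃ z : ℝ × ℝ, ‖z‖ < 1 ∧ T u v = convexHull ℝ {p u, p v, z})
    (hTpts : ∀ u v, G.Adj u v → T u v ∩ Set.range p = {p u, p v})
    (S : Finset V) :
    (∀ u ∈ S, ∀ v ∈ S, ¬ G.Adj u v) ↔
      (∀ u v, G.Adj u v → {q : ℝ × ℝ | q ∈ T u v ∧ ∃ s ∈ S, p s = q}.ncard ≤ 1) := by
  constructor
  · intro hInd u v huv
    have hfin : {q : ℝ × ℝ | q ∈ T u v ∧ ∃ s ∈ S, p s = q}.Finite := by
      apply Set.Finite.subset (Set.finite_range p)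
      rintro q ⟨-, s, -, rfl⟩
      exact ⟨s, rfl⟩
    rw [Set.ncard_le_one hfin]
    intro q1 hq1 q2 hq2
    obtain ⟨hq1T, s1, hs1, hs1e⟩ := hq1
    obtain ⟨hq2T, s2, hs2, hs2e⟩ := hq2
    have h1 : q1 ∈ ({p u, p v} : Set (ℝ × ℝ)) := by
      rw [← hTpts u v huv]; exact ⟨hq1T, s1, hs1e⟩
    have h2 : q2 ∈ ({p u, p v} : Set (ℝ × ℝ)) := by
      rw [← hTpts u v huv]; exact ⟨hq2T, s2, hs2e⟩
    have key : ∀ s ∈ S, ∀ t ∈ S, p s ∈ ({p u, p v} : Set (ℝ × ℝ)) →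
        p t ∈ ({p u, p v} : Set (ℝ × ℝ)) → p s = p t := by
      intro s hs t ht hps hpt
      rcases hps with hps | hps <;> rcases hpt with hpt | hpt
      · rw [hps, hpt]
      · exact absurd (hinj hps ▸ hinj hpt ▸ huv) (hInd s hs t ht)
      · exact absurd (hinj hpt ▸ hinj hps ▸ huv) (fun h => hInd t ht s hs h)
      · rw [hps, hpt]
    rw [← hs1e, ← hs2e]
    exact key s1 hs1 s2 hs2 (hs1e ▸ h1) (hs2e ▸ h2)
  · intro hfeas u hu v hv huv
    have hne : u ≠ v := huv.ne
    have hpu : p u ∈ T u v := by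
      have : p u ∈ T u v ∩ Set.range p := by
        rw [hTpts u v huv]; exact Or.inl rfl
      exact this.1
    have hpv : p v ∈ T u v := by
      have : p v ∈ T u v ∩ Set.range p := by
        rw [hTpts u v huv]; exact Or.inr rfl
      exact this.1
    have hsub : ({p u, p v} : Set (ℝ × ℝ)) ⊆
        {q : ℝ × ℝ | q ∈ T u v ∧ ∃ s ∈ S, p s = q} := by
      rintro q (rfl | rfl)
      · exact ⟨hpu, u, hu, rfl⟩
      · exact ⟨hpv, v, hv, rfl⟩
    have hfin : {q : ℝ × ℝ | q ∈ T u v ∧ ∃ s ∈ S, p s = q}.Finite := by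
      apply Set.Finite.subset (Set.finite_range p)
      rintro q ⟨-, s, -, rfl⟩
      exact ⟨s, rfl⟩
    have h2 : 2 ≤ {q : ℝ × ℝ | q ∈ T u v ∧ ∃ s ∈ S, p s = q}.ncard := by
      have := Set.ncard_le_ncard hsub hfin
      rwa [Set.ncard_pair (fun h => hne (hinj h))] at this
    exact absurd (hfeas u v huv) (by omega)
end
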